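/- A finite simple graph G = (V,E) is a primitive pseudo-cograph if and only if |V| ≥ 4 and there exist a vertex v ∈ V and two sequences of distinct vertices Y = (y₁, …, y_{ℓ−1}, y_ℓ = v) and Z = (z₁, …, z_{m−1}, z_m = v) with ℓ, m ≥ 2, such that Y ∩ Z = {v}, Y ∪ Z = V, and one of the following holds: (a) the induced subgraphs G[Y] and G[Z] are connected and the edges of G are exactly the pairs {y_i, y_j} with 1 ≤ i < j ≤ ℓ and i odd, together with the pairs {z_i, z_j} with 1 ≤ i < j ≤ m and i odd; or (b) the induced subgraphs G[Y] and G[Z] are disconnected and the edges of G are exactly the pairs {y_i, y_j} with 1 ≤ i < j ≤ ℓ and i even, the pairs {z_i, z_j} with 1 ≤ i < j ≤ m and i even, and all pairs {y, z} with y ∈ Y\{v} and z ∈ Z\{v}. -/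

import Mathlib

/-- A graph is P₄-free (i.e., a cograph) if it has no induced subgraph
isomorphic to the path on four vertices. -/
def IsP4Free {V : Type} (G : SimpleGraph V) : Prop :=
  ¬ Nonempty (SimpleGraph.pathGraph 4 ↪g G)

/-- `G` is a `(v, G[V1], G[V2])`-pseudo-cograph. -/
def IsPseudoCographAt {V : Type} (G : SimpleGraph V) (v : V) (V1 V2 : Set V) : Prop :=
  V1 ∪ V2 = Set.univ ∧ V1 ∩ V2 = {v} ∧ 1 < V1.ncard ∧ 1 < V2.ncard ∧
  IsP4Free (G.induce V1) ∧ IsP4Free (G.induce V2) ∧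
  ((∀ x ∈ V1 \ {v}, ∀ y ∈ V2 \ {v}, G.Adj x y) ∨
   (∀ x ∈ V1 \ {v}, ∀ y ∈ V2 \ {v}, ¬ G.Adj x y))

/-- `G` is a pseudo-cograph. -/
def IsPseudoCograph {V : Type} (G : SimpleGraph V) : Prop :=
  Nat.card V ≤ 2 ∨ ∃ (v : V) (V1 V2 : Set V), IsPseudoCographAt G v V1 V2

/-- `M` is a module of `G`. -/
def IsModule {V : Type} (G : SimpleGraph V) (M : Set V) : Prop :=
  ∀ z ∉ M, (∀ x ∈ M, G.Adj z x) ∨ (∀ x ∈ M, ¬ G.Adj z x)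

/-- A graph is primitive if it has at least four vertices and all of its
modules are trivial. -/
def IsPrimitive {V : Type} (G : SimpleGraph V) : Prop :=
  4 ≤ Nat.card V ∧
    ∀ M : Set V, IsModule G M → M = ∅ ∨ (∃ x, M = {x}) ∨ M = Set.univ

/-!
Modules of `G[V₁]` avoiding `v` are modules of `G`, hence trivial when `G` is primitive. By
Seinsche's theorem the cograph `G[V₁]` or its complement is disconnected, and the part avoiding
`v` is then a single vertex; peeling such isolated or dominating vertices off one at a time orders
`V₁` as `y₁, …, y_ℓ = v` with each `y_i` dominating or isolated among the later vertices. Two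
consecutive vertices of the same kind would be twins, so the kinds alternate. A primitive graph
has no isolated vertex, so `y₁` is dominating when no edge crosses between `V₁` and `V₂`: this is
case (a), and case (b) is its complement. Conversely such nested sequences induce cographs, and a
module containing two vertices spreads along both sequences to all of `V`.
-/

section Cographs

open Set SimpleGraph

variable {W : Type} {H : SimpleGraph W}

lemma isP4Free_iff : IsP4Free H ↔
    ∀ a b c d, H.Adj a b → H.Adj b c → H.Adj c d → H.Adj a c ∨ H.Adj a d ∨ H.Adj b d := by
  refine ⟨fun h a b c d hab hbc hcd => ?_, fun h ⟨f⟩ => ?_⟩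
  · by_contra! hn
    obtain ⟨hac, had, hbd⟩ := hn
    have : a ≠ c := by rintro rfl; exact had hcd
    have : a ≠ d := by rintro rfl; exact hac hcd.symm
    have : b ≠ d := by rintro rfl; exact had hab
    refine h ⟨⟨![a, b, c, d], fun i j hij => ?_⟩, fun {i j} => ?_⟩
    · fin_cases i <;> fin_cases j <;> simp_all [hab.ne, hbc.ne, hcd.ne, eq_comm]
    · change H.Adj (![a, b, c, d] i) (![a, b, c, d] j) ↔ _
      fin_cases i <;> fin_cases j <;> simp [pathGraph_adj, hab, hbc, hcd, hab.symm, hbc.symm,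
        hcd.symm, hac, had, hbd, adj_comm H c a, adj_comm H d a, adj_comm H d b]
  · simpa [f.map_adj_iff, pathGraph_adj] using h (f 0) (f 1) (f 2) (f 3)

variable {V : Type} {G : SimpleGraph V}

lemma isP4Free_induce_iff {S : Set V} : IsP4Free (G.induce S) ↔
    ∀ a ∈ S, ∀ b ∈ S, ∀ c ∈ S, ∀ d ∈ S, G.Adj a b → G.Adj b c → G.Adj c d →
      G.Adj a c ∨ G.Adj a d ∨ G.Adj b d := by
  simp [isP4Free_iff]

lemma IsP4Free.compl (h : IsP4Free H) : IsP4Free Hᶜ := by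
  rw [isP4Free_iff] at h ⊢
  intro a b c d hab hbc hcd
  by_contra! hn
  obtain ⟨hac, had, hbd⟩ := hn
  have hac' : a ≠ c := by rintro rfl; exact had hcd
  have had' : a ≠ d := by rintro rfl; exact hac hcd.symm
  have hbd' : b ≠ d := by rintro rfl; exact had hab
  simp only [compl_adj, not_and, not_not] at hab hbc hcd hac had hbd
  -- `b - d - a - c` is an induced path in `H`
  rcases h b d a c (hbd hbd') (had had').symm (hac hac') with h | h | h
  · exact hab.2 h.symm
  · exact hbc.2 h
  · exact hcd.2 h.symm

lemma IsP4Free.induce_compl {S : Set V} (h : IsP4Free (G.induce S)) :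
    IsP4Free (Gᶜ.induce S) := by
  have : Gᶜ.induce S = (G.induce S)ᶜ := by ext; simp [Subtype.ext_iff]
  exact this ▸ h.compl

lemma IsP4Free.induce_mono {S T : Set V} (h : IsP4Free (G.induce S)) (hTS : T ⊆ S) :
    IsP4Free (G.induce T) :=
  fun ⟨f⟩ => h ⟨f.trans (G.induceHomOfLE hTS)⟩

def IsSeparated (G : SimpleGraph V) (S : Set V) : Prop :=
  ∃ T ⊆ S, T.Nonempty ∧ (S \ T).Nonempty ∧ ∀ a ∈ T, ∀ b ∈ S \ T, ¬ G.Adj a b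

section Separation

variable {S A B : Set V} {x : V}

lemma isSeparated_of_forall_not_adj (hx : x ∈ S) (hS : (S \ {x}).Nonempty)
    (h : ∀ b ∈ S \ {x}, ¬ G.Adj x b) : IsSeparated G S :=
  ⟨{x}, singleton_subset_iff.2 hx, singleton_nonempty x, hS, by simpa using h⟩

lemma isSeparated_of_union (hx : x ∈ S) (hAB : A ∪ B = S \ {x}) (hA : A.Nonempty)
    (hsep : ∀ a ∈ A, ∀ b ∈ B, ¬ G.Adj a b) (hxA : ∀ a ∈ A, ¬ G.Adj x a) :
    IsSeparated G S := by
  have hAS : A ⊆ S \ {x} := hAB ▸ subset_union_left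
  refine ⟨A, fun a ha => (hAS ha).1, hA, ⟨x, hx, fun h => (hAS h).2 rfl⟩, ?_⟩
  rintro a ha c ⟨hcS, hcA⟩ hac
  by_cases hcx : c = x
  · exact hxA a ha (hcx ▸ hac.symm)
  · have hc : c ∈ A ∪ B := hAB ▸ ⟨hcS, hcx⟩
    exact hsep a ha c (hc.resolve_left hcA) hac

lemma forall_adj_or_isSeparated (hP4 : IsP4Free (G.induce S)) (hx : x ∈ S)
    (hAB : A ∪ B = S \ {x}) (hsep : ∀ a ∈ A, ∀ b ∈ B, ¬ G.Adj a b) {b : V} (hb : b ∈ B)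
    (hxb : G.Adj x b) : (∀ a ∈ A, G.Adj x a) ∨ IsSeparated G S := by
  by_cases hall : ∀ a ∈ A, G.Adj x a
  · exact .inl hall
  right
  push Not at hall
  obtain ⟨w, hwA, hxw⟩ := hall
  have hAS : A ⊆ S \ {x} := hAB ▸ subset_union_left
  have hbS : b ∈ S := (hAB ▸ mem_union_right A hb : b ∈ S \ {x}).1
  refine ⟨{a ∈ A | ¬ G.Adj x a}, fun a ha => (hAS ha.1).1, ⟨w, hwA, hxw⟩,
    ⟨x, hx, fun h => (hAS h.1).2 rfl⟩, ?_⟩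
  rintro a ⟨haA, hxa⟩ c ⟨hcS, hcT⟩ hac
  by_cases hcx : c = x
  · exact hxa (hcx ▸ hac.symm)
  have hc : c ∈ A ∪ B := hAB ▸ ⟨hcS, hcx⟩
  rcases hc with hcA | hcB
  · have hxc : G.Adj x c := by_contra fun h => hcT ⟨hcA, h⟩
    -- otherwise `a - c - x - b` is an induced path
    rcases isP4Free_induce_iff.1 hP4 a (hAS haA).1 c hcS x hx b hbS hac hxc.symm hxb
      with h | h | h
    · exact hxa h.symm
    · exact hsep a haA b hb h
    · exact hsep c hcA b hb h
  · exact hsep a haA c hcB hac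

lemma IsSeparated.of_sdiff_singleton (h : IsSeparated G (S \ {x})) (hP4 : IsP4Free (G.induce S))
    (hx : x ∈ S) : IsSeparated G S ∨ IsSeparated Gᶜ S := by
  obtain ⟨A, hA, hAne, hBne, hsep⟩ := h
  set B : Set V := (S \ {x}) \ A
  have hAB : A ∪ B = S \ {x} := union_sdiff_cancel hA
  have hsep' : ∀ b ∈ B, ∀ a ∈ A, ¬ G.Adj b a := fun b hb a ha h => hsep a ha b hb h.symm
  by_cases hxA : ∀ a ∈ A, ¬ G.Adj x a
  · exact .inl (isSeparated_of_union hx hAB hAne hsep hxA)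
  by_cases hxB : ∀ b ∈ B, ¬ G.Adj x b
  · exact .inl (isSeparated_of_union hx (union_comm A B ▸ hAB) hBne hsep' hxB)
  push Not at hxA hxB
  obtain ⟨a, ha, hxa⟩ := hxA
  obtain ⟨b, hb, hxb⟩ := hxB
  rcases forall_adj_or_isSeparated hP4 hx hAB hsep hb hxb with hxA | hS
  · rcases forall_adj_or_isSeparated hP4 hx (union_comm A B ▸ hAB) hsep' ha hxa with hxB | hS
    · refine .inr (isSeparated_of_forall_not_adj hx ⟨a, (hA ha)⟩ fun c hc h => h.2 ?_)
      rcases (hAB ▸ hc : c ∈ A ∪ B) with hc | hc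
      exacts [hxA c hc, hxB c hc]
    · exact .inl hS
  · exact .inl hS

/-- Seinsche: a P₄-free graph on at least two vertices or its complement is disconnected. -/
theorem isSeparated_or_isSeparated_compl [Finite V] (hP4 : IsP4Free (G.induce S))
    (hS : 2 ≤ S.ncard) : IsSeparated G S ∨ IsSeparated Gᶜ S := by
  obtain ⟨n, hn⟩ : ∃ n, S.ncard = n + 2 := ⟨S.ncard - 2, by omega⟩
  induction n generalizing S with
  | zero =>
    obtain ⟨a, b, hab, rfl⟩ := ncard_eq_two.1 hn
    have hS : ({a, b} : Set V) \ {a} = {b} := by simp [hab.symm]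
    by_cases h : G.Adj a b
    · exact .inr (isSeparated_of_forall_not_adj (x := a) (by simp) (by simp [hS]) (by simp [hS, h]))
    · exact .inl (isSeparated_of_forall_not_adj (x := a) (by simp) (by simp [hS]) (by simpa [hS]))
  | succ n ih =>
    obtain ⟨x, hx⟩ := nonempty_of_ncard_ne_zero (by omega : S.ncard ≠ 0)
    have hP4' := hP4.induce_mono (sdiff_subset (t := {x}))
    rcases ih hP4' (by rw [ncard_sdiff_singleton_of_mem hx]; omega)
      (by rw [ncard_sdiff_singleton_of_mem hx]; omega) with h | h
    · exact h.of_sdiff_singleton hP4 hx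
    · simpa only [compl_compl, or_comm] using h.of_sdiff_singleton hP4.induce_compl hx

end Separation

def IsModuleOn (G : SimpleGraph V) (S M : Set V) : Prop :=
  M ⊆ S ∧ ∀ z ∈ S \ M, (∀ x ∈ M, G.Adj z x) ∨ (∀ x ∈ M, ¬ G.Adj z x)

section Modules

variable {S M : Set V}

lemma isModuleOn_univ : IsModuleOn G univ M ↔ IsModule G M := by
  simp [IsModuleOn, IsModule]

lemma isModuleOn_compl : IsModuleOn Gᶜ S M ↔ IsModuleOn G S M := by
  refine and_congr_right fun _ => forall₂_congr fun z hz => ?_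
  have h : ∀ x ∈ M, (Gᶜ.Adj z x ↔ ¬ G.Adj z x) := fun x hx => by
    simp [compl_adj, show z ≠ x from fun h => hz.2 (h ▸ hx)]
  rw [or_comm]
  exact or_congr (forall₂_congr fun x hx => by rw [h x hx, not_not])
    (forall₂_congr fun x hx => h x hx)

lemma isModule_compl : IsModule Gᶜ M ↔ IsModule G M := by
  rw [← isModuleOn_univ, ← isModuleOn_univ, isModuleOn_compl]

lemma IsPrimitive.compl (h : IsPrimitive G) : IsPrimitive Gᶜ :=
  ⟨h.1, fun M hM => h.2 M (isModule_compl.1 hM)⟩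

lemma IsModule.mem_of_adj_iff_not_adj (hM : IsModule G M) {a b c : V} (ha : a ∈ M)
    (hb : b ∈ M) (h : G.Adj c a ↔ ¬ G.Adj c b) : c ∈ M := by
  by_contra hc
  rcases hM c hc with h' | h'
  · exact h.1 (h' a ha) (h' b hb)
  · exact h' a ha (h.2 (h' b hb))

lemma IsPrimitive.exists_adj [Finite V] (hG : IsPrimitive G) (u : V) : ∃ w, G.Adj u w := by
  by_contra! hu
  have hM : IsModule G {u}ᶜ := fun z hz => .inr fun x _ => by
    rw [notMem_compl_iff.1 hz]; exact hu x
  have hcard : ({u}ᶜ : Set V).ncard = Nat.card V - 1 := by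
    rw [ncard_compl, ncard_singleton]
  rcases hG.2 _ hM with h | ⟨x, h⟩ | h
  · rw [h, ncard_empty] at hcard; have := hG.1; omega
  · rw [h, ncard_singleton] at hcard; have := hG.1; omega
  · exact (h ▸ mem_univ u : u ∈ ({u}ᶜ : Set V)) rfl

lemma isModuleOn_pair {S : Set V} {a b : V} (ha : a ∈ S) (hb : b ∈ S)
    (h : ∀ z ∈ S, z ≠ a → z ≠ b → (G.Adj z a ↔ G.Adj z b)) : IsModuleOn G S {a, b} := by
  refine ⟨insert_subset ha (singleton_subset_iff.2 hb), fun z ⟨hz, hzab⟩ => ?_⟩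
  simp only [mem_insert_iff, mem_singleton_iff, not_or] at hzab
  have h := h z hz hzab.1 hzab.2
  by_cases hza : G.Adj z a
  · exact .inl (by simpa [hza] using h.1 hza)
  · exact .inr (by simpa [hza] using mt h.2 hza)

end Modules

/-- Each `y i` is dominating (`p i`) or isolated (`¬ p i`) in `G[y i, …, y n]`. -/
def IsNestedSeq (G : SimpleGraph V) (p : ℕ → Prop) (n : ℕ) (y : ℕ → V) : Prop :=
  ∀ ⦃i j⦄, 1 ≤ i → i < j → j ≤ n → (G.Adj (y i) (y j) ↔ p i)

def consSeq {α : Type*} (a : α) (y : ℕ → α) (i : ℕ) : α :=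
  if i = 1 then a else y (i - 1)

section NestedSeq

variable {p : ℕ → Prop} {n : ℕ} {y : ℕ → V}

lemma image_consSeq (a : V) (y : ℕ → V) (n : ℕ) :
    consSeq a y '' Icc 1 (n + 1) = insert a (y '' Icc 1 n) := by
  ext x
  simp only [mem_image, mem_Icc, mem_insert_iff, consSeq]
  constructor
  · rintro ⟨i, hi, rfl⟩
    by_cases h : i = 1
    · simp [h]
    · exact .inr ⟨i - 1, by omega, by simp [h]⟩
  · rintro (rfl | ⟨i, hi, rfl⟩)
    · exact ⟨1, by omega, by simp⟩
    · exact ⟨i + 1, by omega, by simp [show i ≠ 0 by omega]⟩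

lemma Set.InjOn.consSeq {a : V} (hy : InjOn y (Icc 1 n)) (ha : a ∉ y '' Icc 1 n) :
    InjOn (consSeq a y) (Icc 1 (n + 1)) := by
  intro i hi j hj hij
  simp only [mem_Icc, _root_.consSeq] at hi hj hij
  have hmem : ∀ k, 1 ≤ k → k ≤ n + 1 → k ≠ 1 → y (k - 1) ∈ y '' Icc 1 n :=
    fun k hk hkn hk1 => mem_image_of_mem y ⟨by omega, by omega⟩
  split_ifs at hij with hi1 hj1 hj1
  · omega
  · exact absurd (hij ▸ hmem j hj.1 hj.2 hj1) ha
  · exact absurd (hij.symm ▸ hmem i hi.1 hi.2 hi1) ha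
  · have := hy ⟨by omega, by omega⟩ ⟨by omega, by omega⟩ hij
    omega

lemma IsNestedSeq.consSeq {a : V} {q : Prop} (hy : IsNestedSeq G p n y)
    (ha : ∀ j ∈ Icc 1 n, G.Adj a (y j) ↔ q) :
    IsNestedSeq G (consSeq q p) (n + 1) (consSeq a y) := by
  intro i j hi hij hj
  have hj1 : j ≠ 1 := by omega
  by_cases hi1 : i = 1
  · simpa [_root_.consSeq, hi1, hj1] using ha (j - 1) ⟨by omega, by omega⟩
  · simpa [_root_.consSeq, hi1, hj1] using
      hy (i := i - 1) (j := j - 1) (by omega) (by omega) (by omega)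

lemma IsNestedSeq.isP4Free (hy : IsNestedSeq G p n y) : IsP4Free (G.induce (y '' Icc 1 n)) := by
  rw [isP4Free_induce_iff]
  rintro _ ⟨a, ha, rfl⟩ _ ⟨b, hb, rfl⟩ _ ⟨c, hc, rfl⟩ _ ⟨d, hd, rfl⟩ hab hbc hcd
  by_contra! hn
  obtain ⟨hac, had, hbd⟩ := hn
  simp only [mem_Icc] at ha hb hc hd
  have : a ≠ b := fun h => hab.ne (congrArg y h)
  have : b ≠ c := fun h => hbc.ne (congrArg y h)
  have : c ≠ d := fun h => hcd.ne (congrArg y h)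
  have : a ≠ c := by rintro rfl; exact had hcd
  have : a ≠ d := by rintro rfl; exact hac hcd.symm
  have : b ≠ d := by rintro rfl; exact had hab
  have uniform : ∀ {i j k}, 1 ≤ i → i < j → i < k → j ≤ n → k ≤ n →
      G.Adj (y i) (y j) → G.Adj (y i) (y k) := fun hi hij hik hj hk h =>
    (hy hi hik hk).2 ((hy hi hij hj).1 h)
  -- the vertex of least index is adjacent to all or none of the other three
  rcases (by omega : (a < b ∧ a < c) ∨ (b < a ∧ b < d) ∨ (c < b ∧ c < a) ∨ (d < c ∧ d < a))
    with h | h | h | h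
  · exact hac (uniform ha.1 h.1 h.2 hb.2 hc.2 hab)
  · exact hbd (uniform hb.1 h.1 h.2 ha.2 hd.2 hab.symm)
  · exact hac (uniform hc.1 h.1 h.2 hb.2 ha.2 hbc.symm).symm
  · exact had (uniform hd.1 h.1 h.2 hc.2 ha.2 hcd.symm).symm

lemma IsNestedSeq.isModuleOn_pair {i : ℕ} (hy : IsNestedSeq G p n y) (hi : 1 ≤ i)
    (hin : i + 1 ≤ n) (hp : p (i + 1) ↔ p i) :
    IsModuleOn G (y '' Icc 1 n) {y i, y (i + 1)} := by
  refine _root_.isModuleOn_pair (mem_image_of_mem y ⟨hi, by omega⟩)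
    (mem_image_of_mem y ⟨by omega, hin⟩) ?_
  rintro _ ⟨k, hk, rfl⟩ hki hki'
  have hki : k ≠ i := fun h => hki (h ▸ rfl)
  have hki' : k ≠ i + 1 := fun h => hki' (h ▸ rfl)
  rcases (by omega : k < i ∨ i + 1 < k) with h | h
  · rw [hy hk.1 h (by omega), hy hk.1 (by omega) hin]
  · rw [G.adj_comm, G.adj_comm _ (y (i + 1)), hy hi (by omega) hk.2, hy (by omega) h hk.2, hp]

lemma IsNestedSeq.alternating (hy : IsNestedSeq G p n y) (hinj : InjOn y (Icc 1 n))
    (hmod : ∀ M, IsModuleOn G (y '' Icc 1 n) M → y n ∉ M → M.Subsingleton) {i : ℕ}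
    (hi : 1 ≤ i) (hin : i + 1 < n) : p (i + 1) ↔ ¬ p i := by
  by_contra h
  have hM := hy.isModuleOn_pair hi hin.le (by tauto)
  have hyn : y n ∉ ({y i, y (i + 1)} : Set V) := by
    simp only [mem_insert_iff, mem_singleton_iff, not_or]
    exact ⟨(hinj.ne_iff ⟨by omega, le_rfl⟩ ⟨hi, by omega⟩).2 (by omega),
      (hinj.ne_iff ⟨by omega, le_rfl⟩ ⟨by omega, hin.le⟩).2 (by omega)⟩
  have := (hinj.ne_iff ⟨hi, by omega⟩ ⟨by omega, hin.le⟩).2 (by omega)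
  exact this (hmod _ hM hyn (by simp) (by simp))

lemma IsNestedSeq.odd (hy : IsNestedSeq G p n y) (h1 : p 1)
    (halt : ∀ i, 1 ≤ i → i + 1 < n → (p (i + 1) ↔ ¬ p i)) : IsNestedSeq G Odd n y := by
  have hodd : ∀ i, 1 ≤ i → i < n → (p i ↔ Odd i) := by
    intro i hi hin
    induction i, hi using Nat.le_induction with
    | base => simpa using h1
    | succ i hi ih => rw [halt i hi hin, ih (by omega), Nat.odd_add_one]
  intro i j hi hij hj
  rw [hy hi hij hj, hodd i hi (by omega)]

lemma IsNestedSeq.compl (hy : IsNestedSeq G p n y) (hinj : InjOn y (Icc 1 n)) :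
    IsNestedSeq Gᶜ (fun i => ¬ p i) n y := by
  intro i j hi hij hj
  rw [compl_adj, hy hi hij hj, and_iff_right ((hinj.ne_iff ⟨hi, by omega⟩ ⟨by omega, hj⟩).2 hij.ne)]

lemma IsNestedSeq.connected_induce (hy : IsNestedSeq G p n y) (h1 : p 1) (hn : 1 ≤ n) :
    (G.induce (y '' Icc 1 n)).Connected := by
  have hy1 : y 1 ∈ y '' Icc 1 n := mem_image_of_mem y ⟨le_rfl, hn⟩
  have hreach : ∀ u, (G.induce (y '' Icc 1 n)).Reachable ⟨y 1, hy1⟩ u := by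
    rintro ⟨_, j, hj, rfl⟩
    rcases hj.1.eq_or_lt with rfl | h
    · rfl
    · exact Adj.reachable ((hy le_rfl h hj.2).2 h1)
  have : Nonempty (y '' Icc 1 n) := ⟨⟨y 1, hy1⟩⟩
  exact ⟨fun u w => (hreach u).symm.trans (hreach w)⟩

lemma IsNestedSeq.not_connected_induce (hy : IsNestedSeq G p n y) (h1 : ¬ p 1)
    (hinj : InjOn y (Icc 1 n)) (hn : 2 ≤ n) : ¬ (G.induce (y '' Icc 1 n)).Connected := by
  intro hc
  have hy1 : y 1 ∈ y '' Icc 1 n := mem_image_of_mem y ⟨le_rfl, by omega⟩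
  have : Nontrivial (y '' Icc 1 n) := nontrivial_coe_sort.2
    ⟨y 1, hy1, y 2, mem_image_of_mem y ⟨by omega, hn⟩,
      (hinj.ne_iff ⟨le_rfl, by omega⟩ ⟨by omega, hn⟩).2 (by omega)⟩
  obtain ⟨⟨_, j, hj, rfl⟩, h⟩ := hc.preconnected.exists_adj_of_nontrivial ⟨y 1, hy1⟩
  have hj1 : 1 ≠ j := fun h' => h.ne (by simp [h'])
  exact h1 ((hy le_rfl (hj.1.lt_of_ne hj1) hj.2).1 h)

end NestedSeq

section Decomposition

variable {S : Set V} {v : V}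

lemma exists_forall_not_adj_of_separated {P : Set V} (hPS : P ⊆ S) (hP : P.Nonempty)
    (hvP : v ∉ P) (hsep : ∀ a ∈ P, ∀ b ∈ S \ P, ¬ G.Adj a b)
    (hmod : ∀ M, IsModuleOn G S M → v ∉ M → M.Subsingleton) :
    ∃ a ∈ S, a ≠ v ∧ ∀ b ∈ S \ {a}, ¬ G.Adj a b := by
  obtain ⟨a, ha⟩ := hP
  have hsub := hmod P ⟨hPS, fun z hz => .inr fun x hx h => hsep x hx z hz h.symm⟩ hvP
  exact ⟨a, hPS ha, fun h => hvP (h ▸ ha),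
    fun b hb => hsep a ha b ⟨hb.1, fun hbP => hb.2 (hsub hbP ha)⟩⟩

lemma IsSeparated.exists_forall_not_adj (h : IsSeparated G S)
    (hmod : ∀ M, IsModuleOn G S M → v ∉ M → M.Subsingleton) :
    ∃ a ∈ S, a ≠ v ∧ ∀ b ∈ S \ {a}, ¬ G.Adj a b := by
  obtain ⟨T, hT, hTne, hTc, hsep⟩ := h
  by_cases hv : v ∈ T
  · refine exists_forall_not_adj_of_separated sdiff_subset hTc (fun h => h.2 hv)
      (fun a ha b hb hab => hsep b ?_ a ha hab.symm) hmod
    by_contra hbT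
    exact hb.2 ⟨hb.1, hbT⟩
  · exact exists_forall_not_adj_of_separated hT hTne hv hsep hmod

lemma exists_ne_forall_adj_iff [Finite V] (hP4 : IsP4Free (G.induce S)) (hS : 2 ≤ S.ncard)
    (hmod : ∀ M, IsModuleOn G S M → v ∉ M → M.Subsingleton) :
    ∃ a ∈ S, a ≠ v ∧ ∃ q : Prop, ∀ b ∈ S \ {a}, (G.Adj a b ↔ q) := by
  rcases isSeparated_or_isSeparated_compl hP4 hS with h | h
  · obtain ⟨a, ha, hav, hb⟩ := h.exists_forall_not_adj hmod
    exact ⟨a, ha, hav, False, fun b hb' => iff_false_intro (hb b hb')⟩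
  · obtain ⟨a, ha, hav, hb⟩ := h.exists_forall_not_adj fun M hM => hmod M (isModuleOn_compl.1 hM)
    refine ⟨a, ha, hav, True, fun b hb' => iff_true_intro ?_⟩
    simpa [compl_adj, Ne.symm hb'.2] using hb b hb'

lemma IsModuleOn.of_sdiff_singleton {M : Set V} {a : V} {q : Prop}
    (hM : IsModuleOn G (S \ {a}) M) (ha : ∀ b ∈ S \ {a}, G.Adj a b ↔ q) : IsModuleOn G S M := by
  refine ⟨hM.1.trans sdiff_subset, fun z hz => ?_⟩
  by_cases hza : z = a
  · subst hza
    by_cases hq : q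
    · exact .inl fun x hx => (ha x (hM.1 hx)).2 hq
    · exact .inr fun x hx h => hq ((ha x (hM.1 hx)).1 h)
  · exact hM.2 z ⟨⟨hz.1, hza⟩, hz.2⟩

/-- Peeling off a dominating or isolated vertex other than `v` until only `v` remains. -/
lemma exists_isNestedSeq [Finite V] (n : ℕ) (hS : S.ncard = n + 1) (hv : v ∈ S)
    (hP4 : IsP4Free (G.induce S)) (hmod : ∀ M, IsModuleOn G S M → v ∉ M → M.Subsingleton) :
    ∃ (y : ℕ → V) (p : ℕ → Prop), InjOn y (Icc 1 (n + 1)) ∧ y '' Icc 1 (n + 1) = S ∧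
      y (n + 1) = v ∧ IsNestedSeq G p (n + 1) y := by
  induction n generalizing S with
  | zero =>
    obtain ⟨w, rfl⟩ := ncard_eq_one.1 hS
    obtain rfl : v = w := hv
    refine ⟨fun _ => v, fun _ => True, fun i hi j hj _ => ?_, by simp, rfl, fun i j _ _ _ => ?_⟩
    · simp only [zero_add, mem_Icc] at hi hj; omega
    · omega
  | succ n ih =>
    obtain ⟨a, ha, hav, q, hq⟩ := exists_ne_forall_adj_iff hP4 (by omega) hmod
    obtain ⟨y, p, hinj, himg, hlast, hy⟩ := ih (S := S \ {a})
      (by rw [ncard_sdiff_singleton_of_mem ha]; omega) ⟨hv, hav.symm⟩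
      (hP4.induce_mono sdiff_subset) fun M hM hvM => hmod M (hM.of_sdiff_singleton hq) hvM
    have haY : a ∉ y '' Icc 1 (n + 1) := by rw [himg]; exact fun h => h.2 rfl
    refine ⟨consSeq a y, consSeq q p, hinj.consSeq haY, ?_, by simpa [consSeq] using hlast,
      hy.consSeq fun j hj => hq _ (himg ▸ mem_image_of_mem y hj)⟩
    rw [image_consSeq, himg, insert_sdiff_singleton, insert_eq_of_mem ha]

lemma IsPrimitive.subsingleton_of_isModuleOn (hG : IsPrimitive G) {M : Set V}
    (hM : IsModuleOn G S M) (hvM : v ∉ M) (hsep : ∀ x ∈ S \ {v}, ∀ z ∉ S, ¬ G.Adj x z) :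
    M.Subsingleton := by
  have hGM : IsModule G M := fun z hz => by
    by_cases hzS : z ∈ S
    · exact hM.2 z ⟨hzS, hz⟩
    · exact .inr fun x hx h => hsep x ⟨hM.1 hx, fun e => hvM (e ▸ hx)⟩ z hzS h.symm
  rcases hG.2 M hGM with rfl | ⟨x, rfl⟩ | rfl
  · exact subsingleton_empty
  · exact subsingleton_singleton
  · exact absurd (mem_univ v) hvM

lemma IsPrimitive.exists_isNestedSeq_odd [Finite V] (hG : IsPrimitive G) (hv : v ∈ S)
    (hS : 2 ≤ S.ncard) (hP4 : IsP4Free (G.induce S))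
    (hsep : ∀ x ∈ S \ {v}, ∀ z ∉ S, ¬ G.Adj x z) :
    ∃ y : ℕ → V, InjOn y (Icc 1 S.ncard) ∧ y '' Icc 1 S.ncard = S ∧ y S.ncard = v ∧
      IsNestedSeq G Odd S.ncard y := by
  have hmod : ∀ M, IsModuleOn G S M → v ∉ M → M.Subsingleton :=
    fun M hM hvM => hG.subsingleton_of_isModuleOn hM hvM hsep
  obtain ⟨n, hn⟩ : ∃ n, S.ncard = n + 1 := ⟨S.ncard - 1, by omega⟩
  obtain ⟨y, p, hinj, rfl, rfl, hy⟩ := exists_isNestedSeq n hn hv hP4 hmod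
  rw [hn] at hS ⊢
  refine ⟨y, hinj, rfl, rfl, hy.odd ?_ fun i hi hin => hy.alternating hinj hmod hi hin⟩
  -- otherwise `y 1` would be isolated in `G`
  by_contra h1
  obtain ⟨w, hw⟩ := hG.exists_adj (y 1)
  have hy1 : y 1 ∈ y '' Icc 1 (n + 1) \ {y (n + 1)} :=
    ⟨mem_image_of_mem y ⟨le_rfl, by omega⟩,
      (hinj.ne_iff ⟨le_rfl, by omega⟩ ⟨by omega, le_rfl⟩).2 (by omega)⟩
  by_cases hwS : w ∈ y '' Icc 1 (n + 1)
  · obtain ⟨j, hj, rfl⟩ := hwS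
    have hj1 : 1 ≠ j := fun h => hw.ne (by rw [h])
    exact h1 ((hy le_rfl (hj.1.lt_of_ne hj1) hj.2).1 hw)
  · exact hsep _ hy1 w hwS hw

end Decomposition

structure IsSeqSplit (v : V) (ℓ m : ℕ) (y z : ℕ → V) : Prop where
  two_le_left : 2 ≤ ℓ
  two_le_right : 2 ≤ m
  injOn_left : InjOn y (Icc 1 ℓ)
  injOn_right : InjOn z (Icc 1 m)
  left_last : y ℓ = v
  right_last : z m = v
  inter_eq : y '' Icc 1 ℓ ∩ z '' Icc 1 m = {v}
  union_eq : y '' Icc 1 ℓ ∪ z '' Icc 1 m = univ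

/-- The edge relation of the theorem, where `c` says whether the pairs `{y i, z j}` are edges. -/
def SplitEdge (p : ℕ → Prop) (c : Prop) (ℓ m : ℕ) (y z : ℕ → V) (a b : V) : Prop :=
  (∃ i j : ℕ, 1 ≤ i ∧ i < j ∧ j ≤ ℓ ∧ p i ∧ ({a, b} : Set V) = {y i, y j}) ∨
  (∃ i j : ℕ, 1 ≤ i ∧ i < j ∧ j ≤ m ∧ p i ∧ ({a, b} : Set V) = {z i, z j}) ∨
  (c ∧ ∃ i j : ℕ, 1 ≤ i ∧ i < ℓ ∧ 1 ≤ j ∧ j < m ∧ ({a, b} : Set V) = {y i, z j})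

section SplitEdge

variable {p : ℕ → Prop} {c : Prop} {ℓ m : ℕ} {y z : ℕ → V} {a b : V}

lemma splitEdge_comm : SplitEdge p c ℓ m y z a b ↔ SplitEdge p c ℓ m y z b a := by
  simp only [SplitEdge, pair_comm a b]

lemma splitEdge_swap : SplitEdge p c ℓ m y z a b ↔ SplitEdge p c m ℓ z y a b := by
  unfold SplitEdge
  rw [or_left_comm]
  refine or_congr_right (or_congr_right (and_congr_right fun _ => ⟨?_, ?_⟩)) <;>
    rintro ⟨i, j, hi, hil, hj, hjm, he⟩ <;>
    exact ⟨j, i, hj, hjm, hi, hil, he.trans (pair_comm _ _)⟩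
lemma pair_subset_image {n i j : ℕ} (hi : i ∈ Icc 1 n) (hj : j ∈ Icc 1 n) :
    ({y i, y j} : Set V) ⊆ y '' Icc 1 n :=
  pair_subset (mem_image_of_mem y hi) (mem_image_of_mem y hj)

end SplitEdge

lemma isSeqSplit_and_iff {v : V} {ℓ m : ℕ} {y z : ℕ → V} {X : Prop} : IsSeqSplit v ℓ m y z ∧ X ↔
    2 ≤ ℓ ∧ 2 ≤ m ∧ InjOn y (Icc 1 ℓ) ∧ InjOn z (Icc 1 m) ∧ y ℓ = v ∧ z m = v ∧
      y '' Icc 1 ℓ ∩ z '' Icc 1 m = {v} ∧ y '' Icc 1 ℓ ∪ z '' Icc 1 m = univ ∧ X :=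
  ⟨fun ⟨⟨h₁, h₂, h₃, h₄, h₅, h₆, h₇, h₈⟩, h⟩ => ⟨h₁, h₂, h₃, h₄, h₅, h₆, h₇, h₈, h⟩,
    fun ⟨h₁, h₂, h₃, h₄, h₅, h₆, h₇, h₈, h⟩ => ⟨⟨h₁, h₂, h₃, h₄, h₅, h₆, h₇, h₈⟩, h⟩⟩

namespace IsSeqSplit

variable {v : V} {ℓ m : ℕ} {y z : ℕ → V}

variable (hs : IsSeqSplit v ℓ m y z)
include hs

lemma symm : IsSeqSplit v m ℓ z y :=
  ⟨hs.two_le_right, hs.two_le_left, hs.injOn_right, hs.injOn_left, hs.right_last, hs.left_last,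
    inter_comm (y '' _) _ ▸ hs.inter_eq, union_comm (y '' _) _ ▸ hs.union_eq⟩

lemma eq_of_mem_right {i : ℕ} (hi : i ∈ Icc 1 ℓ) (h : y i ∈ z '' Icc 1 m) : i = ℓ := by
  have hv : y i = v := (hs.inter_eq ▸ ⟨mem_image_of_mem y hi, h⟩ : y i ∈ ({v} : Set V))
  exact hs.injOn_left hi ⟨by have := hs.two_le_left; omega, le_rfl⟩ (hv.trans hs.left_last.symm)

lemma ne_right {i j : ℕ} (hi : 1 ≤ i) (hil : i < ℓ) (hj : j ∈ Icc 1 m) : y i ≠ z j :=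
  fun h => hil.ne (hs.eq_of_mem_right ⟨hi, hil.le⟩ (h ▸ mem_image_of_mem z hj))

lemma ncard_left : (y '' Icc 1 ℓ).ncard = ℓ := by
  rw [hs.injOn_left.ncard_image, ncard_Icc_nat]; omega

lemma card_add_one [Finite V] : Nat.card V + 1 = ℓ + m := by
  have := ncard_union_add_ncard_inter (y '' Icc 1 ℓ) (z '' Icc 1 m)
  rwa [hs.union_eq, hs.inter_eq, ncard_univ, ncard_singleton, hs.ncard_left,
    hs.symm.ncard_left] at this

lemma eq_univ_of_forall_mem {M : Set V} (hy : ∀ i ∈ Icc 1 ℓ, y i ∈ M)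
    (hz : ∀ j ∈ Icc 1 m, z j ∈ M) : M = univ :=
  eq_univ_of_univ_subset (hs.union_eq ▸ union_subset (image_subset_iff.2 hy)
    (image_subset_iff.2 hz))

lemma forall_pairs {R : V → V → Prop} (hsymm : ∀ a b, R a b → R b a) (hrefl : ∀ a, R a a)
    (hY : ∀ ⦃i j⦄, 1 ≤ i → i < j → j ≤ ℓ → R (y i) (y j))
    (hZ : ∀ ⦃i j⦄, 1 ≤ i → i < j → j ≤ m → R (z i) (z j))
    (hYZ : ∀ ⦃i j⦄, 1 ≤ i → i < ℓ → 1 ≤ j → j < m → R (y i) (z j)) (a b : V) : R a b := by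
  have seq : ∀ {n} {x : ℕ → V}, (∀ ⦃i j⦄, 1 ≤ i → i < j → j ≤ n → R (x i) (x j)) →
      ∀ i ∈ Icc 1 n, ∀ j ∈ Icc 1 n, R (x i) (x j) := by
    intro n x h i hi j hj
    rcases lt_trichotomy i j with hij | rfl | hij
    exacts [h hi.1 hij hj.2, hrefl _, hsymm _ _ (h hj.1 hij hi.2)]
  have cross : ∀ i ∈ Icc 1 ℓ, ∀ j ∈ Icc 1 m, R (y i) (z j) := by
    intro i hi j hj
    have := hs.two_le_left
    have := hs.two_le_right
    by_cases hil : i < ℓ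
    · by_cases hjm : j < m
      · exact hYZ hi.1 hil hj.1 hjm
      · rw [show j = m by grind, hs.right_last, ← hs.left_last]
        exact seq hY i hi ℓ ⟨by omega, le_rfl⟩
    · rw [show i = ℓ by grind, hs.left_last, ← hs.right_last]
      exact seq hZ m ⟨by omega, le_rfl⟩ j hj
  have hmem : ∀ x, x ∈ y '' Icc 1 ℓ ∪ z '' Icc 1 m := fun x => hs.union_eq ▸ mem_univ x
  rcases hmem a with ⟨i, hi, rfl⟩ | ⟨i, hi, rfl⟩ <;> rcases hmem b with ⟨j, hj, rfl⟩ | ⟨j, hj, rfl⟩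
  exacts [seq hY i hi j hj, cross i hi j hj, hsymm _ _ (cross j hj i hi), seq hZ i hi j hj]

variable {p : ℕ → Prop} {c : Prop}

lemma splitEdge_left {i j : ℕ} (hi : 1 ≤ i) (hij : i < j) (hj : j ≤ ℓ) :
    SplitEdge p c ℓ m y z (y i) (y j) ↔ p i := by
  refine ⟨?_, fun hp => .inl ⟨i, j, hi, hij, hj, hp, rfl⟩⟩
  have hiY : i ∈ Icc 1 ℓ := ⟨hi, by omega⟩
  have hjY : j ∈ Icc 1 ℓ := ⟨by omega, hj⟩
  rintro (⟨i', j', hi', hij', hj', hp, he⟩ | ⟨i', j', hi', hij', hj', -, he⟩ |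
    ⟨-, i', j', hi', hil', hj', hjm', he⟩)
  · rcases pair_eq_pair_iff.1 he with ⟨h₁, -⟩ | ⟨h₁, h₂⟩
    · rwa [hs.injOn_left hiY ⟨hi', by omega⟩ h₁]
    · have := hs.injOn_left hiY ⟨by omega, hj'⟩ h₁
      have := hs.injOn_left hjY ⟨hi', by omega⟩ h₂
      omega
  · have hZ := he ▸ pair_subset_image (y := z) ⟨hi', by omega⟩ ⟨by omega, hj'⟩
    have := hs.eq_of_mem_right hiY (hZ (mem_insert _ _))
    have := hs.eq_of_mem_right hjY (hZ (mem_insert_of_mem _ rfl))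
    omega
  · have hY := he.symm ▸ pair_subset_image hiY hjY
    exact (hjm'.ne (hs.symm.eq_of_mem_right ⟨hj', hjm'.le⟩ (hY (mem_insert_of_mem _ rfl)))).elim

lemma splitEdge_left_right {i j : ℕ} (hi : 1 ≤ i) (hil : i < ℓ) (hj : 1 ≤ j) (hjm : j < m) :
    SplitEdge p c ℓ m y z (y i) (z j) ↔ c := by
  refine ⟨?_, fun hc => .inr (.inr ⟨hc, i, j, hi, hil, hj, hjm, rfl⟩)⟩
  rintro (⟨i', j', hi', hij', hj', -, he⟩ | ⟨i', j', hi', hij', hj', -, he⟩ | ⟨hc, -⟩)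
  · have hY := he ▸ pair_subset_image ⟨hi', by omega⟩ ⟨by omega, hj'⟩
    exact (hjm.ne (hs.symm.eq_of_mem_right ⟨hj, hjm.le⟩ (hY (mem_insert_of_mem _ rfl)))).elim
  · have hZ := he ▸ pair_subset_image (y := z) ⟨hi', by omega⟩ ⟨by omega, hj'⟩
    exact (hil.ne (hs.eq_of_mem_right ⟨hi, hil.le⟩ (hZ (mem_insert _ _)))).elim
  · exact hc

lemma not_splitEdge_self (a : V) : ¬ SplitEdge p c ℓ m y z a a := by
  rintro (⟨i, j, hi, hij, hj, -, he⟩ | ⟨i, j, hi, hij, hj, -, he⟩ | ⟨-, i, j, hi, hil, hj, hjm, he⟩)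
  · have := (hs.injOn_left.ne_iff ⟨hi, by omega⟩ ⟨by omega, hj⟩).2 hij.ne
    rcases pair_eq_pair_iff.1 he with ⟨h₁, h₂⟩ | ⟨h₁, h₂⟩ <;> exact this (by rw [← h₁, ← h₂])
  · have := (hs.injOn_right.ne_iff ⟨hi, by omega⟩ ⟨by omega, hj⟩).2 hij.ne
    rcases pair_eq_pair_iff.1 he with ⟨h₁, h₂⟩ | ⟨h₁, h₂⟩ <;> exact this (by rw [← h₁, ← h₂])
  · have := hs.ne_right hi hil ⟨hj, hjm.le⟩
    rcases pair_eq_pair_iff.1 he with ⟨h₁, h₂⟩ | ⟨h₁, h₂⟩ <;> exact this (by rw [← h₁, ← h₂])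

lemma forall_adj_iff_splitEdge_iff {G : SimpleGraph V} :
    (∀ a b, G.Adj a b ↔ SplitEdge p c ℓ m y z a b) ↔
      IsNestedSeq G p ℓ y ∧ IsNestedSeq G p m z ∧
        ∀ ⦃i j⦄, 1 ≤ i → i < ℓ → 1 ≤ j → j < m → (G.Adj (y i) (z j) ↔ c) := by
  constructor
  · intro h
    refine ⟨fun i j hi hij hj => (h _ _).trans (hs.splitEdge_left hi hij hj),
      fun i j hi hij hj => (h _ _).trans ?_,
      fun i j hi hil hj hjm => (h _ _).trans (hs.splitEdge_left_right hi hil hj hjm)⟩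
    rw [splitEdge_swap]
    exact hs.symm.splitEdge_left hi hij hj
  · rintro ⟨hy, hz, hc⟩
    refine hs.forall_pairs (fun a b h => ?_)
      (fun a => iff_of_false G.irrefl (hs.not_splitEdge_self a)) ?_ ?_ ?_
    · rwa [G.adj_comm, splitEdge_comm]
    · intro i j hi hij hj
      rw [hy hi hij hj, hs.splitEdge_left hi hij hj]
    · intro i j hi hij hj
      rw [hz hi hij hj, splitEdge_swap, hs.symm.splitEdge_left hi hij hj]
    · intro i j hi hil hj hjm
      rw [hc hi hil hj hjm, hs.splitEdge_left_right hi hil hj hjm]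

end IsSeqSplit

lemma IsNestedSeq.mem_of_mem_of_mem {n : ℕ} {y : ℕ → V} {M : Set V}
    (hy : IsNestedSeq G Odd n y) (hM : IsModule G M) {i j k : ℕ} (hi : 1 ≤ i) (hij : i < j)
    (hj : j ≤ n) (hyi : y i ∈ M) (hyj : y j ∈ M) (hik : i ≤ k) (hk : k ≤ n) : y k ∈ M := by
  have hsucc : y (i + 1) ∈ M := by
    rcases (by omega : j = i + 1 ∨ i + 1 < j) with rfl | h
    · exact hyj
    · refine hM.mem_of_adj_iff_not_adj hyi hyj ?_
      rw [G.adj_comm, hy hi (by omega) (by omega), hy (by omega) h hj, Nat.odd_add_one, not_not]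
  rcases (by omega : k = i ∨ k = i + 1 ∨ i + 1 < k) with rfl | rfl | h
  · exact hyi
  · exact hsucc
  · refine hM.mem_of_adj_iff_not_adj hyi hsucc ?_
    rw [G.adj_comm, hy hi (by omega) hk, G.adj_comm, hy (by omega) h hk, Nat.odd_add_one, not_not]

/-- The configuration of case (a); case (b) is the same configuration in the complement. -/
structure IsOddPattern (G : SimpleGraph V) (ℓ m : ℕ) (y z : ℕ → V) : Prop where
  left : IsNestedSeq G Odd ℓ y
  right : IsNestedSeq G Odd m z
  not_adj : ∀ ⦃i j⦄, 1 ≤ i → i < ℓ → 1 ≤ j → j < m → ¬ G.Adj (y i) (z j)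

namespace IsOddPattern

variable {v : V} {ℓ m : ℕ} {y z : ℕ → V} {M : Set V}

lemma symm (h : IsOddPattern G ℓ m y z) : IsOddPattern G m ℓ z y :=
  ⟨h.right, h.left, fun _ _ hi hil hj hjm hadj => h.not_adj hj hjm hi hil hadj.symm⟩

section Module

variable (h : IsOddPattern G ℓ m y z) (hs : IsSeqSplit v ℓ m y z) (hM : IsModule G M)
include h hs hM

lemma eq_univ_of_mem_left {i j : ℕ} (hi : 1 ≤ i) (hij : i < j) (hj : j ≤ ℓ) (hyi : y i ∈ M)
    (hyj : y j ∈ M) : M = univ := by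
  have hℓ := hs.two_le_left
  have hm := hs.two_le_right
  have hvz : y ℓ = z m := hs.left_last.trans hs.right_last.symm
  have hv : y ℓ ∈ M := h.left.mem_of_mem_of_mem hM hi hij hj hyi hyj (by omega) le_rfl
  have hv' : y (ℓ - 1) ∈ M := h.left.mem_of_mem_of_mem hM hi hij hj hyi hyj (by omega) (by omega)
  have hz₁ : z 1 ∈ M := hM.mem_of_adj_iff_not_adj hv hv' <| iff_of_true
    (hvz ▸ (h.right le_rfl (by omega) le_rfl).2 odd_one)
    (fun h' => h.not_adj (by omega) (by omega) le_rfl (by omega) h'.symm)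
  have hy₁ : y 1 ∈ M := hM.mem_of_adj_iff_not_adj hv hz₁ <| iff_of_true
    ((h.left le_rfl (by omega) le_rfl).2 odd_one) (h.not_adj le_rfl (by omega) le_rfl (by omega))
  exact hs.eq_univ_of_forall_mem
    (fun k hk => h.left.mem_of_mem_of_mem hM le_rfl (by omega) le_rfl hy₁ hv hk.1 hk.2)
    (fun k hk => h.right.mem_of_mem_of_mem hM le_rfl (by omega) le_rfl hz₁ (hvz ▸ hv) hk.1 hk.2)

lemma eq_univ_of_mem_left_right (hℓ : 3 ≤ ℓ) {i j : ℕ} (hi : 1 ≤ i) (hil : i < ℓ) (hj : 1 ≤ j)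
    (hjm : j < m) (hyi : y i ∈ M) (hzj : z j ∈ M) : M = univ := by
  -- a neighbour `y k` of `y i` with `k < ℓ` is not adjacent to `z j`
  obtain ⟨k, hk, hkl, hki, hadj⟩ : ∃ k, 1 ≤ k ∧ k < ℓ ∧ k ≠ i ∧ G.Adj (y k) (y i) := by
    rcases (by omega : i = 1 ∨ 1 < i) with rfl | h1
    · exact ⟨2, by omega, hℓ, by omega, ((h.left le_rfl one_lt_two (by omega)).2 odd_one).symm⟩
    · exact ⟨1, le_rfl, by omega, by omega, (h.left le_rfl h1 hil.le).2 odd_one⟩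
  have hyk : y k ∈ M :=
    hM.mem_of_adj_iff_not_adj hyi hzj (iff_of_true hadj (h.not_adj hk hkl hj hjm))
  rcases lt_or_gt_of_ne hki with h' | h'
  · exact h.eq_univ_of_mem_left hs hM hk h' hil.le hyk hyi
  · exact h.eq_univ_of_mem_left hs hM hi h' hkl.le hyi hyk

lemma eq_univ_of_mem_left_of_ne [Finite V] (hcard : 4 ≤ Nat.card V) {i : ℕ}
    (hi : i ∈ Icc 1 ℓ) (hyi : y i ∈ M) {b : V} (hb : b ∈ M) (hne : y i ≠ b) : M = univ := by
  have hℓm := hs.card_add_one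
  have hmem : b ∈ y '' Icc 1 ℓ ∪ z '' Icc 1 m := hs.union_eq ▸ mem_univ b
  rcases hmem with ⟨j, hj, rfl⟩ | ⟨j, hj, rfl⟩
  · have hij : i ≠ j := fun e => hne (e ▸ rfl)
    rcases lt_or_gt_of_ne hij with h' | h'
    · exact h.eq_univ_of_mem_left hs hM hi.1 h' hj.2 hyi hb
    · exact h.eq_univ_of_mem_left hs hM hj.1 h' hi.2 hb hyi
  by_cases hil : i < ℓ
  · by_cases hjm : j < m
    · rcases (by omega : 3 ≤ ℓ ∨ 3 ≤ m) with h3 | h3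
      · exact h.eq_univ_of_mem_left_right hs hM h3 hi.1 hil hj.1 hjm hyi hb
      · exact h.symm.eq_univ_of_mem_left_right hs.symm hM h3 hj.1 hjm hi.1 hil hb hyi
    · rw [show j = m by grind, hs.right_last, ← hs.left_last] at hb
      exact h.eq_univ_of_mem_left hs hM hi.1 hil le_rfl hyi hb
  · rw [show i = ℓ by grind, hs.left_last, ← hs.right_last] at hyi hne
    have hjm : j < m := lt_of_le_of_ne hj.2 fun e => hne (e ▸ rfl)
    exact h.symm.eq_univ_of_mem_left hs.symm hM hj.1 hjm le_rfl hb hyi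

end Module

lemma isPrimitive [Finite V] (h : IsOddPattern G ℓ m y z) (hs : IsSeqSplit v ℓ m y z)
    (hcard : 4 ≤ Nat.card V) : IsPrimitive G := by
  refine ⟨hcard, fun M hM => ?_⟩
  by_cases hsub : M.Subsingleton
  · rcases hsub.eq_empty_or_singleton with h' | h'
    exacts [.inl h', .inr (.inl h')]
  obtain ⟨a, ha, b, hb, hab⟩ := not_subsingleton_iff.1 hsub
  have hmem : a ∈ y '' Icc 1 ℓ ∪ z '' Icc 1 m := hs.union_eq ▸ mem_univ a
  refine .inr (.inr ?_)
  rcases hmem with ⟨i, hi, rfl⟩ | ⟨i, hi, rfl⟩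
  · exact h.eq_univ_of_mem_left_of_ne hs hM hcard hi ha hb hab
  · exact h.symm.eq_univ_of_mem_left_of_ne hs.symm hM hcard hi ha hb hab

lemma isPseudoCographAt (h : IsOddPattern G ℓ m y z) (hs : IsSeqSplit v ℓ m y z) :
    IsPseudoCographAt G v (y '' Icc 1 ℓ) (z '' Icc 1 m) := by
  refine ⟨hs.union_eq, hs.inter_eq, ?_, ?_, h.left.isP4Free, h.right.isP4Free, .inr ?_⟩
  · rw [hs.ncard_left]; exact hs.two_le_left
  · rw [hs.symm.ncard_left]; exact hs.two_le_right
  rintro _ ⟨⟨i, hi, rfl⟩, hiv⟩ _ ⟨⟨j, hj, rfl⟩, hjv⟩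
  refine h.not_adj hi.1 (lt_of_le_of_ne hi.2 ?_) hj.1 (lt_of_le_of_ne hj.2 ?_)
  · rintro rfl; exact hiv hs.left_last
  · rintro rfl; exact hjv hs.right_last

end IsOddPattern

namespace IsSeqSplit

variable {v : V} {ℓ m : ℕ} {y z : ℕ → V} (hs : IsSeqSplit v ℓ m y z)
include hs

lemma isOddPattern_iff {G : SimpleGraph V} :
    IsOddPattern G ℓ m y z ↔ (G.induce (y '' Icc 1 ℓ)).Connected ∧
      (G.induce (z '' Icc 1 m)).Connected ∧
        ∀ a b, G.Adj a b ↔ SplitEdge Odd False ℓ m y z a b := by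
  rw [hs.forall_adj_iff_splitEdge_iff]
  have := hs.two_le_left
  have := hs.two_le_right
  constructor
  · intro h
    exact ⟨h.left.connected_induce odd_one (by omega), h.right.connected_induce odd_one (by omega),
      h.left, h.right, fun i j hi hil hj hjm => iff_false_intro (h.not_adj hi hil hj hjm)⟩
  · rintro ⟨-, -, hy, hz, hc⟩
    exact ⟨hy, hz, fun i j hi hil hj hjm => (hc hi hil hj hjm).1⟩

lemma isOddPattern_compl_iff {G : SimpleGraph V} :
    IsOddPattern Gᶜ ℓ m y z ↔ ¬ (G.induce (y '' Icc 1 ℓ)).Connected ∧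
      ¬ (G.induce (z '' Icc 1 m)).Connected ∧
        ∀ a b, G.Adj a b ↔ SplitEdge Even True ℓ m y z a b := by
  rw [hs.forall_adj_iff_splitEdge_iff]
  constructor
  · intro h
    have hy : IsNestedSeq G Even ℓ y := by
      simpa only [compl_compl, Nat.not_odd_iff_even] using h.left.compl hs.injOn_left
    have hz : IsNestedSeq G Even m z := by
      simpa only [compl_compl, Nat.not_odd_iff_even] using h.right.compl hs.injOn_right
    refine ⟨hy.not_connected_induce Nat.not_even_one hs.injOn_left hs.two_le_left,
      hz.not_connected_induce Nat.not_even_one hs.injOn_right hs.two_le_right, hy, hz,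
      fun i j hi hil hj hjm => iff_true_intro ?_⟩
    by_contra h'
    exact h.not_adj hi hil hj hjm ((compl_adj ..).2 ⟨hs.ne_right hi hil ⟨hj, hjm.le⟩, h'⟩)
  · rintro ⟨-, -, hy, hz, hc⟩
    refine ⟨by simpa only [Nat.not_even_iff_odd] using hy.compl hs.injOn_left,
      by simpa only [Nat.not_even_iff_odd] using hz.compl hs.injOn_right,
      fun i j hi hil hj hjm h' => ((compl_adj ..).1 h').2 ((hc hi hil hj hjm).2 trivial)⟩

end IsSeqSplit

lemma IsPseudoCographAt.compl {v : V} {V₁ V₂ : Set V} (h : IsPseudoCographAt G v V₁ V₂) :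
    IsPseudoCographAt Gᶜ v V₁ V₂ := by
  obtain ⟨hunion, hinter, h₁, h₂, hP₁, hP₂, hcross⟩ := h
  refine ⟨hunion, hinter, h₁, h₂, hP₁.induce_compl, hP₂.induce_compl, ?_⟩
  have hne : ∀ x ∈ V₁ \ {v}, ∀ w ∈ V₂ \ {v}, x ≠ w := by
    rintro x hx _ hw rfl
    exact hx.2 (hinter ▸ ⟨hx.1, hw.1⟩)
  rcases hcross with hall | hnone
  · exact .inr fun x hx w hw h' => ((compl_adj ..).1 h').2 (hall x hx w hw)
  · exact .inl fun x hx w hw => (compl_adj ..).2 ⟨hne x hx w hw, hnone x hx w hw⟩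

lemma IsPrimitive.exists_isOddPattern [Finite V] {v : V} {V₁ V₂ : Set V} (hG : IsPrimitive G)
    (hpc : IsPseudoCographAt G v V₁ V₂) (hnone : ∀ x ∈ V₁ \ {v}, ∀ w ∈ V₂ \ {v}, ¬ G.Adj x w) :
    ∃ ℓ m y z, IsSeqSplit v ℓ m y z ∧ IsOddPattern G ℓ m y z := by
  obtain ⟨hunion, hinter, h₁, h₂, hP₁, hP₂, -⟩ := hpc
  have hv : v ∈ V₁ ∩ V₂ := hinter ▸ rfl
  have hmem : ∀ w, w ∈ V₁ ∪ V₂ := fun w => hunion ▸ mem_univ w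
  obtain ⟨y, hyinj, hyimg, hylast, hy⟩ := hG.exists_isNestedSeq_odd hv.1 h₁ hP₁
    fun x hx w hw => hnone x hx w ⟨(hmem w).resolve_left hw, fun e => hw (e ▸ hv.1)⟩
  obtain ⟨z, hzinj, hzimg, hzlast, hz⟩ := hG.exists_isNestedSeq_odd hv.2 h₂ hP₂
    fun x hx w hw h' => hnone w ⟨(hmem w).resolve_right hw, fun e => hw (e ▸ hv.2)⟩ x hx h'.symm
  have hs : IsSeqSplit v _ _ y z := ⟨h₁, h₂, hyinj, hzinj, hylast, hzlast,
    by rw [hyimg, hzimg, hinter], by rw [hyimg, hzimg, hunion]⟩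
  refine ⟨_, _, y, z, hs, hy, hz, fun i j hi hil hj hjm => hnone _ ?_ _ ?_⟩
  · exact ⟨hyimg ▸ mem_image_of_mem y ⟨hi, hil.le⟩,
      hylast ▸ (hyinj.ne_iff ⟨hi, hil.le⟩ ⟨by omega, le_rfl⟩).2 hil.ne⟩
  · exact ⟨hzimg ▸ mem_image_of_mem z ⟨hj, hjm.le⟩,
      hzlast ▸ (hzinj.ne_iff ⟨hj, hjm.le⟩ ⟨by omega, le_rfl⟩).2 hjm.ne⟩

theorem isPrimitive_and_isPseudoCograph_iff [Finite V] :
    IsPrimitive G ∧ IsPseudoCograph G ↔ 4 ≤ Nat.card V ∧ ∃ v ℓ m y z,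
      IsSeqSplit v ℓ m y z ∧ (IsOddPattern G ℓ m y z ∨ IsOddPattern Gᶜ ℓ m y z) := by
  constructor
  · rintro ⟨hG, hle | ⟨v, V₁, V₂, hpc⟩⟩
    · have := hG.1; omega
    refine ⟨hG.1, v, ?_⟩
    rcases hpc.2.2.2.2.2.2 with hall | hnone
    · obtain ⟨ℓ, m, y, z, hs, h⟩ := hG.compl.exists_isOddPattern hpc.compl
        fun x hx w hw h' => ((compl_adj ..).1 h').2 (hall x hx w hw)
      exact ⟨ℓ, m, y, z, hs, .inr h⟩
    · obtain ⟨ℓ, m, y, z, hs, h⟩ := hG.exists_isOddPattern hpc hnone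
      exact ⟨ℓ, m, y, z, hs, .inl h⟩
  · rintro ⟨hcard, v, ℓ, m, y, z, hs, h | h⟩
    · exact ⟨h.isPrimitive hs hcard, .inr ⟨v, _, _, h.isPseudoCographAt hs⟩⟩
    · have hG := (h.isPrimitive hs hcard).compl
      have hpc := (h.isPseudoCographAt hs).compl
      rw [compl_compl] at hG hpc
      exact ⟨hG, .inr ⟨v, _, _, hpc⟩⟩

end Cographs

/-- A finite simple graph `G` is a primitive pseudo-cograph iff `|V| ≥ 4` and
there are a vertex `v` and two sequences `Y = (y₁, …, y_ℓ = v)` and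
`Z = (z₁, …, z_m = v)` of distinct vertices (`ℓ, m ≥ 2`) with
`Y ∩ Z = {v}` and `Y ∪ Z = V`, such that either
(a) `G[Y]` and `G[Z]` are connected and the edges of `G` are exactly the pairs
`{y_i, y_j}` (`1 ≤ i < j ≤ ℓ`, `i` odd) and `{z_i, z_j}` (`1 ≤ i < j ≤ m`,
`i` odd); or
(b) `G[Y]` and `G[Z]` are disconnected and the edges of `G` are exactly the
pairs `{y_i, y_j}` (`1 ≤ i < j ≤ ℓ`, `i` even), `{z_i, z_j}`
(`1 ≤ i < j ≤ m`, `i` even), and all pairs `{y, z}` with `y ∈ Y \ {v}`,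
`z ∈ Z \ {v}`. -/
theorem primitive_pseudoCograph_characterization {V : Type} [Fintype V]
    (G : SimpleGraph V) :
    (IsPrimitive G ∧ IsPseudoCograph G) ↔
      (4 ≤ Nat.card V ∧
        ∃ (v : V) (ℓ m : ℕ) (y z : ℕ → V),
          2 ≤ ℓ ∧ 2 ≤ m ∧
          Set.InjOn y (Set.Icc 1 ℓ) ∧ Set.InjOn z (Set.Icc 1 m) ∧
          y ℓ = v ∧ z m = v ∧
          (y '' Set.Icc 1 ℓ) ∩ (z '' Set.Icc 1 m) = {v} ∧
          (y '' Set.Icc 1 ℓ) ∪ (z '' Set.Icc 1 m) = Set.univ ∧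
          (((G.induce (y '' Set.Icc 1 ℓ)).Connected ∧
            (G.induce (z '' Set.Icc 1 m)).Connected ∧
            (∀ a b : V, G.Adj a b ↔
              ((∃ i j : ℕ, 1 ≤ i ∧ i < j ∧ j ≤ ℓ ∧ Odd i ∧
                  ({a, b} : Set V) = {y i, y j}) ∨
               (∃ i j : ℕ, 1 ≤ i ∧ i < j ∧ j ≤ m ∧ Odd i ∧
                  ({a, b} : Set V) = {z i, z j}))))
           ∨
           (¬ (G.induce (y '' Set.Icc 1 ℓ)).Connected ∧
            ¬ (G.induce (z '' Set.Icc 1 m)).Connected ∧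
            (∀ a b : V, G.Adj a b ↔
              ((∃ i j : ℕ, 1 ≤ i ∧ i < j ∧ j ≤ ℓ ∧ Even i ∧
                  ({a, b} : Set V) = {y i, y j}) ∨
               (∃ i j : ℕ, 1 ≤ i ∧ i < j ∧ j ≤ m ∧ Even i ∧
                  ({a, b} : Set V) = {z i, z j}) ∨
               (∃ i j : ℕ, 1 ≤ i ∧ i < ℓ ∧ 1 ≤ j ∧ j < m ∧
                  ({a, b} : Set V) = {y i, z j})))))) := by
  rw [isPrimitive_and_isPseudoCograph_iff]
  refine and_congr_right fun _ => exists_congr fun v => exists_congr fun ℓ => exists_congr fun m =>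
    exists_congr fun y => exists_congr fun z => ?_
  rw [← isSeqSplit_and_iff]
  refine and_congr_right fun hs => or_congr ?_ ?_
  · simpa only [SplitEdge, false_and, or_false] using hs.isOddPattern_iff
  · simpa only [SplitEdge, true_and] using hs.isOddPattern_compl_iff
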